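/- Let P_d, P_g be probability measures on a finite set X and P_l, Q_l the level-l progressively augmented distributions on X × {0,1}^l. For any function D : X × {0,1}^l → (0,1), the value V_l(D) = E_{P_l}[log D] + E_{Q_l}[log(1−D)] is maximized over all such D by D*(x,s) = P_l(x,s)/(P_l(x,s)+Q_l(x,s)), and the maximum value is independent of l: it equals 2·D_JS(P_d‖P_g) − 2 log 2 for every l ≥ 0. -/

import Mathlib

/-!
Pointwise, `a log d + b log (1 - d)` is maximised over `d ∈ (0,1)` at `d = a / (a + b)`, by
`log t ≤ t - 1`; summing gives the optimality of `D*`. At `D*` the value is the sum of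
`∑ P_l log (P_l / (P_l + Q_l))` and the same sum with `P_l, Q_l` swapped. Splitting on the last
bit shows that each of these at level `l + 1` is the average of the two at level `l`, so their
total does not depend on `l`; at level `0` it is `2 D_JS(P_d ‖ P_g) - 2 log 2`.
-/

noncomputable def klDivF {X : Type*} [Fintype X] (P Q : X → ℝ) : ℝ :=
  ∑ x, P x * Real.log (P x / Q x)

noncomputable def jsDivF {X : Type*} [Fintype X] (P Q : X → ℝ) : ℝ :=
  (klDivF P (fun x => (P x + Q x) / 2) + klDivF Q (fun x => (P x + Q x) / 2)) / 2

def IsProbF {X : Type*} [Fintype X] (P : X → ℝ) : Prop :=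
  (∀ x, 0 ≤ P x) ∧ ∑ x, P x = 1


noncomputable def PAl {X : Type*} : (l : ℕ) → (P Q : X → ℝ) → X × (Fin l → Bool) → ℝ
  | 0, P, _, p => P p.1
  | (l + 1), P, Q, p =>
      if p.2 (Fin.last l) then PAl l Q P (p.1, fun i => p.2 i.castSucc) / 2
      else PAl l P Q (p.1, fun i => p.2 i.castSucc) / 2

open Real Finset

lemma mul_log_le_mul_log_div_add {c e t : ℝ} (hc : 0 ≤ c) (he : 0 < e) (ht : 0 < t) :
    c * log e ≤ c * log (c / t) + (e * t - c) := by
  rcases hc.eq_or_lt with rfl | hc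
  · simpa using (mul_pos he ht).le
  have hct : 0 < c / t := div_pos hc ht
  have hlog := log_le_sub_one_of_pos (div_pos he hct)
  rw [log_div he.ne' hct.ne'] at hlog
  have key : c * (e / (c / t) - 1) = e * t - c := by field_simp
  linear_combination mul_le_mul_of_nonneg_left hlog hc.le + key

lemma mul_log_add_mul_log_one_sub_le {a b d : ℝ} (ha : 0 ≤ a) (hb : 0 ≤ b) (hab : 0 < a + b)
    (hd0 : 0 < d) (hd1 : d < 1) :
    a * log d + b * log (1 - d) ≤ a * log (a / (a + b)) + b * log (b / (a + b)) := by
  have h₁ := mul_log_le_mul_log_div_add ha hd0 hab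
  have h₂ := mul_log_le_mul_log_div_add hb (sub_pos.2 hd1) hab
  linear_combination h₁ + h₂

lemma sum_fin_succ_bool {M : Type*} [AddCommMonoid M] {n : ℕ} (g : (Fin (n + 1) → Bool) → M) :
    ∑ s, g s = ∑ s : Fin n → Bool, (g (Fin.snoc s false) + g (Fin.snoc s true)) := by
  rw [← (Fin.snocEquiv fun _ => Bool).sum_comp, Fintype.sum_prod_type, Fintype.sum_bool,
    ← sum_add_distrib]
  exact sum_congr rfl fun s _ => add_comm _ _

lemma PAl_nonneg {X : Type*} {P Q : X → ℝ} (hP : ∀ x, 0 ≤ P x) (hQ : ∀ x, 0 ≤ Q x) :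
    ∀ l p, 0 ≤ PAl l P Q p := by
  intro l
  induction l generalizing P Q with
  | zero => exact fun p => hP p.1
  | succ l ih =>
    intro p
    unfold PAl
    split_ifs
    exacts [div_nonneg (ih hQ hP _) zero_le_two, div_nonneg (ih hP hQ _) zero_le_two]

lemma PAl_add_swap_pos {X : Type*} {P Q : X → ℝ} (h : ∀ x, 0 < P x + Q x) :
    ∀ l p, 0 < PAl l P Q p + PAl l Q P p := by
  intro l
  induction l generalizing P Q with
  | zero => exact fun p => h p.1
  | succ l ih =>
    intro p
    unfold PAl
    split_ifs <;> linarith [ih h (p.1, fun i => p.2 i.castSucc)]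

lemma PAl_snoc_false {X : Type*} (l : ℕ) (P Q : X → ℝ) (x : X) (s : Fin l → Bool) :
    PAl (l + 1) P Q (x, Fin.snoc s false) = PAl l P Q (x, s) / 2 := by
  simp [PAl]

lemma PAl_snoc_true {X : Type*} (l : ℕ) (P Q : X → ℝ) (x : X) (s : Fin l → Bool) :
    PAl (l + 1) P Q (x, Fin.snoc s true) = PAl l Q P (x, s) / 2 := by
  simp [PAl]

noncomputable def logShareSum {ι : Type*} [Fintype ι] (A B : ι → ℝ) : ℝ :=
  ∑ i, A i * log (A i / (A i + B i))

lemma logShareSum_PAl_succ {X : Type*} [Fintype X] (l : ℕ) (P Q : X → ℝ) :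
    logShareSum (PAl (l + 1) P Q) (PAl (l + 1) Q P) =
      (logShareSum (PAl l P Q) (PAl l Q P) + logShareSum (PAl l Q P) (PAl l P Q)) / 2 := by
  unfold logShareSum
  rw [Fintype.sum_prod_type, Fintype.sum_prod_type, Fintype.sum_prod_type, ← sum_add_distrib,
    sum_div]
  refine sum_congr rfl fun x _ => ?_
  rw [sum_fin_succ_bool, ← sum_add_distrib, sum_div]
  refine sum_congr rfl fun s _ => ?_
  simp only [PAl_snoc_false, PAl_snoc_true, ← add_div,
    div_div_div_cancel_right₀ (two_ne_zero' ℝ)]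
  ring

lemma logShareSum_PAl_add_swap {X : Type*} [Fintype X] (l : ℕ) (P Q : X → ℝ) :
    logShareSum (PAl l P Q) (PAl l Q P) + logShareSum (PAl l Q P) (PAl l P Q) =
      ∑ x, P x * log (P x / (P x + Q x)) + ∑ x, Q x * log (Q x / (Q x + P x)) := by
  induction l generalizing P Q with
  | zero =>
    simp only [logShareSum, ← (Equiv.prodUnique X (Fin 0 → Bool)).symm.sum_comp]
    rfl
  | succ l ih =>
    rw [logShareSum_PAl_succ, logShareSum_PAl_succ]
    linarith [ih P Q, ih Q P]

lemma klDivF_midpoint {X : Type*} [Fintype X] {R S : X → ℝ} (hR : IsProbF R)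
    (hRS : ∀ x, 0 < R x + S x) :
    klDivF R (fun x => (R x + S x) / 2) = ∑ x, R x * log (R x / (R x + S x)) + log 2 := by
  have hterm : ∀ x, R x * log (R x / ((R x + S x) / 2)) =
      R x * log (R x / (R x + S x)) + R x * log 2 := by
    intro x
    rcases (hR.1 x).eq_or_lt with h | h
    · simp [← h]
    rw [div_div_eq_mul_div, mul_div_right_comm, log_mul (div_pos h (hRS x)).ne' two_ne_zero]
    ring
  rw [klDivF, sum_congr rfl fun x _ => hterm x, sum_add_distrib, ← sum_mul, hR.2, one_mul]

lemma two_mul_jsDivF_sub_log_two {X : Type*} [Fintype X] {P Q : X → ℝ} (hP : IsProbF P)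
    (hQ : IsProbF Q) (hpos : ∀ x, 0 < P x + Q x) :
    2 * jsDivF P Q - 2 * log 2 =
      ∑ x, P x * log (P x / (P x + Q x)) + ∑ x, Q x * log (Q x / (Q x + P x)) := by
  have hmid : (fun x => (P x + Q x) / 2) = fun x => (Q x + P x) / 2 := by
    simp only [add_comm]
  rw [jsDivF, klDivF_midpoint hP hpos, hmid,
    klDivF_midpoint hQ fun x => add_comm (P x) _ ▸ hpos x]
  ring

theorem stmt15 {X : Type*} [Fintype X] (P Q : X → ℝ) (hP : IsProbF P) (hQ : IsProbF Q)
    (hpos : ∀ x, 0 < P x + Q x) :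
    ∀ (l : ℕ) (D : X × (Fin l → Bool) → ℝ), (∀ p, 0 < D p ∧ D p < 1) →
      (∑ p, PAl l P Q p * Real.log (D p)) + (∑ p, PAl l Q P p * Real.log (1 - D p)) ≤
        (∑ p, PAl l P Q p * Real.log (PAl l P Q p / (PAl l P Q p + PAl l Q P p))) +
        (∑ p, PAl l Q P p * Real.log (1 - PAl l P Q p / (PAl l P Q p + PAl l Q P p))) ∧
      (∑ p, PAl l P Q p * Real.log (PAl l P Q p / (PAl l P Q p + PAl l Q P p))) +
        (∑ p, PAl l Q P p * Real.log (1 - PAl l P Q p / (PAl l P Q p + PAl l Q P p))) =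
        2 * jsDivF P Q - 2 * Real.log 2 := by
  intro l D hD
  set A := PAl l P Q
  set B := PAl l Q P
  have hAB : ∀ p, 0 < A p + B p := PAl_add_swap_pos hpos l
  have hcompl : ∀ p, 1 - A p / (A p + B p) = B p / (B p + A p) := fun p => by
    rw [add_comm (B p), one_sub_div (hAB p).ne', add_sub_cancel_left]
  simp only [hcompl]
  constructor
  · rw [← sum_add_distrib, ← sum_add_distrib]
    refine sum_le_sum fun p _ => ?_
    rw [add_comm (B p)]
    exact mul_log_add_mul_log_one_sub_le (PAl_nonneg hP.1 hQ.1 l p) (PAl_nonneg hQ.1 hP.1 l p)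
      (hAB p) (hD p).1 (hD p).2
  · rw [two_mul_jsDivF_sub_log_two hP hQ hpos]
    exact logShareSum_PAl_add_swap l P Q
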